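/- Define T : ℝ^{[n]×S×Aⁿ} × Σ₁ → ℝ^{[n]×S×Aⁿ} by T(v,σ₁)_{i,s₁,p₀} := max_{τ₁^i ∈ Σ₁^i} V₁(σ₁, τ₁^i, v)_{i,s₁,p₀}. Then for every v ∈ ℝ^{[n]×S×Aⁿ}, the map σ₁ ↦ T(v,σ₁) is continuous on Σ₁ (with the supremum metric); and for every bounded subset B ⊂ ℝ^{[n]×S×Aⁿ}, the family of maps {σ₁ ↦ T(v,σ₁)}_{v ∈ B} is equicontinuous on Σ₁. -/

import Mathlib

/-!
A one-step value `V₁(σ, τ, v)` is a finite sum over price profiles `p₁` of the weight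
`τ(p₁ⁱ) ∏_{j ≠ i} σʲ(p₁ʲ)` times a stage payoff that does not involve `σ`. On policy profiles
all weights lie in `[0, 1]`, so a weight moves by at most `|ι| · ‖σ - σ'‖` and `V₁` is Lipschitz
in `σ`, with a constant that is uniform in the deviation `τ` and depends on `v` only through a
bound on the stage payoffs, hence only through `‖v‖`. A supremum of uniformly Lipschitz
functions is Lipschitz with the same constant, so `σ ↦ T(v, σ)` is Lipschitz, uniformly for `v`
in a bounded set.
-/

open Finset

/-- A one-memory policy for a single firm. -/
def IsPolicy {ι S A : Type*} [Fintype A]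
    (τ : (ι → A) → S → A → ℝ) : Prop :=
  (∀ p₀ s₁ a, 0 ≤ τ p₀ s₁ a) ∧ ∀ p₀ s₁, ∑ a, τ p₀ s₁ a = 1

/-- A transition kernel on states. -/
def IsKernel {ι S A : Type*} [Fintype S]
    (P : (ι → A) → S → S → ℝ) : Prop :=
  (∀ p s s', 0 ≤ P p s s') ∧ ∀ p s, ∑ s', P p s s' = 1

/-- The one-step value operator `V₁`. -/
def V1 {ι S A : Type*} [Fintype ι] [DecidableEq ι] [Fintype S] [Fintype A]
    (P : (ι → A) → S → S → ℝ) (π : ι → (ι → A) → S → ℝ) (δ : ι → ℝ)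
    (σ : ι → (ι → A) → S → A → ℝ) (τ : (ι → A) → S → A → ℝ)
    (v : ι → S → (ι → A) → ℝ) (i : ι) (s₁ : S) (p₀ : ι → A) : ℝ :=
  ∑ p₁ : ι → A,
    (τ p₀ s₁ (p₁ i) * ∏ j ∈ Finset.univ.erase i, σ j p₀ s₁ (p₁ j)) *
      (π i p₁ s₁ + δ i * ∑ s₂, P p₁ s₁ s₂ * v i s₂ p₁)

/-- The operator `T(v,σ)`. -/
noncomputable def Tmap {ι S A : Type*} [Fintype ι] [DecidableEq ι] [Fintype S] [Fintype A]
    (P : (ι → A) → S → S → ℝ) (π : ι → (ι → A) → S → ℝ) (δ : ι → ℝ)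
    (v : ι → S → (ι → A) → ℝ) (σ : ι → (ι → A) → S → A → ℝ) :
    ι → S → (ι → A) → ℝ :=
  fun i s₁ p₀ => sSup ((fun τ => V1 P π δ σ τ v i s₁ p₀) '' {τ | IsPolicy τ})

theorem Finset.norm_prod_sub_prod_le_sum {ι R : Type*} [NormedCommRing R] [NormOneClass R]
    (t : Finset ι) {f g : ι → R} (hf : ∀ j ∈ t, ‖f j‖ ≤ 1) (hg : ∀ j ∈ t, ‖g j‖ ≤ 1) :
    ‖∏ j ∈ t, f j - ∏ j ∈ t, g j‖ ≤ ∑ j ∈ t, ‖f j - g j‖ := by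
  induction t using Finset.cons_induction with
  | empty => simp
  | cons a t _ ih =>
    simp only [Finset.forall_mem_cons] at hf hg
    have hft : ‖∏ j ∈ t, f j‖ ≤ 1 :=
      (Finset.norm_prod_le t f).trans (Finset.prod_le_one (fun _ _ => norm_nonneg _) hf.2)
    rw [Finset.prod_cons, Finset.prod_cons, Finset.sum_cons]
    calc ‖f a * ∏ j ∈ t, f j - g a * ∏ j ∈ t, g j‖
        = ‖(f a - g a) * ∏ j ∈ t, f j + g a * (∏ j ∈ t, f j - ∏ j ∈ t, g j)‖ := by
          congr 1; ring
      _ ≤ ‖f a - g a‖ * ‖∏ j ∈ t, f j‖ + ‖g a‖ * ‖∏ j ∈ t, f j - ∏ j ∈ t, g j‖ :=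
        (norm_add_le _ _).trans (add_le_add (norm_mul_le _ _) (norm_mul_le _ _))
      _ ≤ ‖f a - g a‖ * 1 + 1 * ∑ j ∈ t, ‖f j - g j‖ := by
        gcongr
        exacts [hg.1, ih hf.2 hg.2]
      _ = ‖f a - g a‖ + ∑ j ∈ t, ‖f j - g j‖ := by ring

theorem Real.dist_sSup_image_le {X : Type*} {s : Set X} {f g : X → ℝ} {c : ℝ}
    (hf : BddAbove (f '' s)) (hg : BddAbove (g '' s)) (hc : 0 ≤ c)
    (h : ∀ x ∈ s, dist (f x) (g x) ≤ c) :
    dist (sSup (f '' s)) (sSup (g '' s)) ≤ c := by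
  rcases s.eq_empty_or_nonempty with rfl | hs
  · simpa using hc
  have sSup_le_add_sSup {f g : X → ℝ} (hg : BddAbove (g '' s))
      (h : ∀ x ∈ s, dist (f x) (g x) ≤ c) : sSup (f '' s) ≤ c + sSup (g '' s) := by
    refine csSup_le (hs.image f) ?_
    rintro _ ⟨x, hx, rfl⟩
    linarith [(abs_sub_le_iff.1 (h x hx)).1, le_csSup hg (Set.mem_image_of_mem g hx)]
  rw [Real.dist_eq, abs_sub_le_iff, sub_le_iff_le_add, sub_le_iff_le_add]
  exact ⟨sSup_le_add_sSup hg h, sSup_le_add_sSup hf fun x hx => dist_comm (g x) (f x) ▸ h x hx⟩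

theorem Finset.norm_sum_mul_le {X R : Type*} [SeminormedRing R] (s : Finset X) {w r : X → R}
    {a M : ℝ} (hw : ∀ x ∈ s, ‖w x‖ ≤ a) (hr : ∀ x ∈ s, ‖r x‖ ≤ M) :
    ‖∑ x ∈ s, w x * r x‖ ≤ s.card * (a * M) := by
  calc ‖∑ x ∈ s, w x * r x‖ ≤ ∑ _x ∈ s, a * M := (norm_sum_le _ _).trans <|
        Finset.sum_le_sum fun x hx => (norm_mul_le _ _).trans <|
          mul_le_mul (hw x hx) (hr x hx) (norm_nonneg _) ((norm_nonneg _).trans (hw x hx))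
    _ = s.card * (a * M) := by rw [Finset.sum_const, nsmul_eq_mul]

theorem LipschitzOnWith.sSup_image {X T : Type*} [PseudoMetricSpace X] {F : T → X → ℝ}
    {t : Set T} {s : Set X} {K : NNReal} (hF : ∀ τ ∈ t, LipschitzOnWith K (F τ) s)
    (hbdd : ∀ x ∈ s, BddAbove ((F · x) '' t)) :
    LipschitzOnWith K (fun x => sSup ((F · x) '' t)) s :=
  LipschitzOnWith.of_dist_le_mul fun _ hx _ hy =>
    Real.dist_sSup_image_le (hbdd _ hx) (hbdd _ hy) (by positivity)
      fun τ hτ => (hF τ hτ).dist_le_mul _ hx _ hy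

theorem LipschitzOnWith.pi {X ι : Type*} [PseudoEMetricSpace X] [Fintype ι] {Y : ι → Type*}
    [∀ i, PseudoEMetricSpace (Y i)] {f : X → ∀ i, Y i} {s : Set X} {K : NNReal}
    (hf : ∀ i, LipschitzOnWith K (fun x => f x i) s) : LipschitzOnWith K f s :=
  fun _ hx _ hy => edist_pi_le_iff.2 fun i => hf i hx hy

section OneMemory

variable {ι S A : Type*}

theorem IsPolicy.norm_le_one [Fintype A] {τ : (ι → A) → S → A → ℝ} (hτ : IsPolicy τ)
    (p₀ : ι → A) (s₁ : S) (a : A) : ‖τ p₀ s₁ a‖ ≤ 1 := by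
  rw [Real.norm_of_nonneg (hτ.1 p₀ s₁ a), ← hτ.2 p₀ s₁]
  exact Finset.single_le_sum (fun b _ => hτ.1 p₀ s₁ b) (Finset.mem_univ a)

variable [Fintype ι] [DecidableEq ι] [Fintype A]

def profileWeight (σ : ι → (ι → A) → S → A → ℝ) (τ : (ι → A) → S → A → ℝ) (i : ι) (s₁ : S)
    (p₀ p₁ : ι → A) : ℝ :=
  τ p₀ s₁ (p₁ i) * ∏ j ∈ univ.erase i, σ j p₀ s₁ (p₁ j)

theorem norm_profileWeight_le_one {σ : ι → (ι → A) → S → A → ℝ} (hσ : ∀ j, IsPolicy (σ j))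
    {τ : (ι → A) → S → A → ℝ} (hτ : IsPolicy τ) (i : ι) (s₁ : S) (p₀ p₁ : ι → A) :
    ‖profileWeight σ τ i s₁ p₀ p₁‖ ≤ 1 := by
  rw [profileWeight, norm_mul]
  refine mul_le_one₀ (hτ.norm_le_one _ _ _) (norm_nonneg _) ?_
  exact (Finset.norm_prod_le _ _).trans
    (Finset.prod_le_one (fun _ _ => norm_nonneg _) fun j _ => (hσ j).norm_le_one _ _ _)

variable [Fintype S]

theorem norm_profileWeight_sub_le {σ σ' : ι → (ι → A) → S → A → ℝ}
    (hσ : ∀ j, IsPolicy (σ j)) (hσ' : ∀ j, IsPolicy (σ' j))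
    {τ : (ι → A) → S → A → ℝ} (hτ : IsPolicy τ) (i : ι) (s₁ : S) (p₀ p₁ : ι → A) :
    ‖profileWeight σ τ i s₁ p₀ p₁ - profileWeight σ' τ i s₁ p₀ p₁‖ ≤
      Fintype.card ι * dist σ σ' := by
  have entry_le (j : ι) : ‖σ j p₀ s₁ (p₁ j) - σ' j p₀ s₁ (p₁ j)‖ ≤ dist σ σ' := by
    rw [dist_eq_norm]
    exact (norm_le_pi_norm ((σ - σ') j p₀ s₁) _).trans <|
      (norm_le_pi_norm ((σ - σ') j p₀) _).trans <|
      (norm_le_pi_norm ((σ - σ') j) _).trans (norm_le_pi_norm (σ - σ') j)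
  rw [profileWeight, profileWeight, ← mul_sub, norm_mul]
  calc ‖τ p₀ s₁ (p₁ i)‖ * ‖∏ j ∈ univ.erase i, σ j p₀ s₁ (p₁ j) -
        ∏ j ∈ univ.erase i, σ' j p₀ s₁ (p₁ j)‖
      ≤ 1 * ∑ j ∈ univ.erase i, dist σ σ' := by
        gcongr
        · exact hτ.norm_le_one _ _ _
        · exact (Finset.norm_prod_sub_prod_le_sum _ (fun j _ => (hσ j).norm_le_one _ _ _)
            fun j _ => (hσ' j).norm_le_one _ _ _).trans (Finset.sum_le_sum fun j _ => entry_le j)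
    _ ≤ Fintype.card ι * dist σ σ' := by
        rw [one_mul, Finset.sum_const, nsmul_eq_mul]
        gcongr
        exact_mod_cast Finset.card_erase_le

def stagePayoff (P : (ι → A) → S → S → ℝ) (π : ι → (ι → A) → S → ℝ) (δ : ι → ℝ)
    (v : ι → S → (ι → A) → ℝ) (i : ι) (s₁ : S) (p₁ : ι → A) : ℝ :=
  π i p₁ s₁ + δ i * ∑ s₂, P p₁ s₁ s₂ * v i s₂ p₁

variable (P : (ι → A) → S → S → ℝ) (π : ι → (ι → A) → S → ℝ) (δ : ι → ℝ)

theorem V1_eq_sum_profileWeight_mul_stagePayoff (σ : ι → (ι → A) → S → A → ℝ)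
    (τ : (ι → A) → S → A → ℝ) (v : ι → S → (ι → A) → ℝ) (i : ι) (s₁ : S) (p₀ : ι → A) :
    V1 P π δ σ τ v i s₁ p₀ =
      ∑ p₁, profileWeight σ τ i s₁ p₀ p₁ * stagePayoff P π δ v i s₁ p₁ :=
  rfl

theorem norm_stagePayoff_le {v : ι → S → (ι → A) → ℝ} {R : ℝ} (hv : ‖v‖ ≤ R) (i : ι) (s₁ : S)
    (p₁ : ι → A) :
    ‖stagePayoff P π δ v i s₁ p₁‖ ≤ ‖π‖ + ‖δ‖ * (Fintype.card S * (‖P‖ * R)) := by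
  have hπ : ‖π i p₁ s₁‖ ≤ ‖π‖ := (norm_le_pi_norm (π i p₁) s₁).trans <|
    (norm_le_pi_norm (π i) p₁).trans (norm_le_pi_norm π i)
  have hP (s₂ : S) : ‖P p₁ s₁ s₂‖ ≤ ‖P‖ := (norm_le_pi_norm (P p₁ s₁) s₂).trans <|
    (norm_le_pi_norm (P p₁) s₁).trans (norm_le_pi_norm P p₁)
  have hv (s₂ : S) : ‖v i s₂ p₁‖ ≤ R := (norm_le_pi_norm (v i s₂) p₁).trans <|
    (norm_le_pi_norm (v i) s₂).trans <| (norm_le_pi_norm v i).trans hv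
  have hsum : ‖∑ s₂, P p₁ s₁ s₂ * v i s₂ p₁‖ ≤ Fintype.card S * (‖P‖ * R) :=
    univ.norm_sum_mul_le (fun s₂ _ => hP s₂) fun s₂ _ => hv s₂
  calc ‖stagePayoff P π δ v i s₁ p₁‖
      ≤ ‖π i p₁ s₁‖ + ‖δ i‖ * ‖∑ s₂, P p₁ s₁ s₂ * v i s₂ p₁‖ :=
        (norm_add_le _ _).trans (add_le_add_right (norm_mul_le _ _) _)
    _ ≤ ‖π‖ + ‖δ‖ * (Fintype.card S * (‖P‖ * R)) := by
        gcongr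
        exact norm_le_pi_norm δ i

variable {P π δ} {v : ι → S → (ι → A) → ℝ} {M : ℝ}

theorem norm_V1_le {σ : ι → (ι → A) → S → A → ℝ} (hσ : ∀ j, IsPolicy (σ j))
    {τ : (ι → A) → S → A → ℝ} (hτ : IsPolicy τ) {i : ι} {s₁ : S}
    (hM : ∀ p₁, ‖stagePayoff P π δ v i s₁ p₁‖ ≤ M) (p₀ : ι → A) :
    ‖V1 P π δ σ τ v i s₁ p₀‖ ≤ Fintype.card (ι → A) * M :=
  (univ.norm_sum_mul_le (fun p₁ _ => norm_profileWeight_le_one hσ hτ i s₁ p₀ p₁)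
    fun p₁ _ => hM p₁).trans_eq (by rw [one_mul, card_univ])

theorem lipschitzOnWith_V1 {τ : (ι → A) → S → A → ℝ} (hτ : IsPolicy τ) {i : ι} {s₁ : S}
    (hM : ∀ p₁, ‖stagePayoff P π δ v i s₁ p₁‖ ≤ M) (p₀ : ι → A) :
    LipschitzOnWith (Fintype.card (ι → A) * (Fintype.card ι * M)).toNNReal
      (fun σ => V1 P π δ σ τ v i s₁ p₀) {σ | ∀ j, IsPolicy (σ j)} :=
  LipschitzOnWith.of_dist_le' fun σ hσ σ' hσ' => by
    rw [dist_eq_norm, V1_eq_sum_profileWeight_mul_stagePayoff,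
      V1_eq_sum_profileWeight_mul_stagePayoff, ← Finset.sum_sub_distrib]
    simp_rw [← sub_mul]
    calc _ ≤ Fintype.card (ι → A) * ((Fintype.card ι * dist σ σ') * M) :=
          univ.norm_sum_mul_le (fun p₁ _ => norm_profileWeight_sub_le hσ hσ' hτ i s₁ p₀ p₁)
            fun p₁ _ => hM p₁
      _ = _ := by ring

theorem lipschitzOnWith_Tmap (hM : ∀ i s₁ p₁, ‖stagePayoff P π δ v i s₁ p₁‖ ≤ M) :
    LipschitzOnWith (Fintype.card (ι → A) * (Fintype.card ι * M)).toNNReal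
      (Tmap P π δ v) {σ | ∀ j, IsPolicy (σ j)} :=
  .pi fun i => .pi fun s₁ => .pi fun p₀ =>
    LipschitzOnWith.sSup_image (fun _ hτ => lipschitzOnWith_V1 hτ (hM i s₁) p₀)
      fun _ hσ => ⟨_, by
        rintro _ ⟨τ, hτ, rfl⟩
        exact (Real.le_norm_self _).trans (norm_V1_le hσ hτ (hM i s₁) p₀)⟩

end OneMemory

theorem Tmap_continuous_and_equicontinuous_general
    {ι S A : Type*} [Fintype ι] [DecidableEq ι]
    [Fintype S]
    [Fintype A]
    (P : (ι → A) → S → S → ℝ)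
    (π : ι → (ι → A) → S → ℝ)
    (δ : ι → ℝ) :
    (∀ v : ι → S → (ι → A) → ℝ,
      ContinuousOn (fun σ : ι → (ι → A) → S → A → ℝ => Tmap P π δ v σ)
        {σ | ∀ j, IsPolicy (σ j)}) ∧
    (∀ B : Set (ι → S → (ι → A) → ℝ), Bornology.IsBounded B →
      EquicontinuousOn
        (fun (v : B) (σ : ι → (ι → A) → S → A → ℝ) => Tmap P π δ v.1 σ)
        {σ | ∀ j, IsPolicy (σ j)}) := by
  constructor
  · intro v
    exact (lipschitzOnWith_Tmap (norm_stagePayoff_le P π δ le_rfl)).continuousOn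
  · intro B hB
    obtain ⟨R, hR⟩ := isBounded_iff_forall_norm_le.1 hB
    exact (LipschitzOnWith.uniformEquicontinuousOn _ _ fun v : B =>
      lipschitzOnWith_Tmap (norm_stagePayoff_le P π δ (hR v v.2))).equicontinuousOn

/-- for every `v`, the map `σ ↦ T(v,σ)` is continuous on `Σ₁`, and for
every bounded set `B` of payoff vectors, the family `{σ ↦ T(v,σ)}_{v ∈ B}` is
equicontinuous on `Σ₁`. -/
theorem Tmap_continuous_and_equicontinuous
    {ι S A : Type*} [Fintype ι] [DecidableEq ι] [Nonempty ι]
    [Fintype S] [DecidableEq S] [Nonempty S]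
    [Fintype A] [DecidableEq A] [Nonempty A]
    (P : (ι → A) → S → S → ℝ) (hP : IsKernel P)
    (π : ι → (ι → A) → S → ℝ)
    (δ : ι → ℝ) (hδ : ∀ i, 0 < δ i ∧ δ i < 1) :
    (∀ v : ι → S → (ι → A) → ℝ,
      ContinuousOn (fun σ : ι → (ι → A) → S → A → ℝ => Tmap P π δ v σ)
        {σ | ∀ j, IsPolicy (σ j)}) ∧
    (∀ B : Set (ι → S → (ι → A) → ℝ), Bornology.IsBounded B →
      EquicontinuousOn
        (fun (v : B) (σ : ι → (ι → A) → S → A → ℝ) => Tmap P π δ v.1 σ)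
        {σ | ∀ j, IsPolicy (σ j)}) :=
  Tmap_continuous_and_equicontinuous_general P π δ
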